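/- Let I be a roommates instance with strict preferences and a critical set C⊆V, and suppose some fractional-matching of I saturates every vertex of C. Let I' be the level instance of I with critical set C, and let M' be a stable half-matching of I' with respect to the strict orders ≻'_w. Then the projection M of M' saturates every vertex of C, i.e., M is a critical fractional-matching of I. -/
import Mathlib
set_option maxHeartbeats 1000000
set_option linter.unusedVariables false


open Finset

namespace SR

variable {V E : Type*} [Fintype V] [Fintype E] [DecidableEq V] [DecidableEq E]

/-- The set of edges incident to a vertex `v`.  A multigraph is given by a finite
edge type `E`, a finite vertex type `V` and two endpoint maps `es et : E → V`
(each edge is the unordered pair of its two distinct endpoints; the orientation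
merely records a fixed ordering of the vertices). -/
def incident (es et : E → V) (v : V) : Finset E :=
  univ.filter fun e => es e = v ∨ et e = v

/-- `Σ_{e ∈ E(v)} M(e)`. -/
noncomputable def degSum (es et : E → V) (M : E → ℝ) (v : V) : ℝ :=
  ∑ e ∈ incident es et v, M e

/-- A fractional-matching. -/
def IsFrac (es et : E → V) (M : E → ℝ) : Prop :=
  (∀ e, 0 ≤ M e) ∧ ∀ v, degSum es et M v ≤ 1

/-- A half-matching. -/
def IsHalf (es et : E → V) (M : E → ℝ) : Prop :=
  IsFrac es et M ∧ ∀ e, M e = 0 ∨ M e = 1 / 2 ∨ M e = 1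

/-- An integral matching (as a fractional-matching). -/
def IsIntegral (M : E → ℝ) : Prop := ∀ e, M e = 0 ∨ M e = 1

/-- The size `Σ_{e ∈ E} M(e)` of a fractional-matching. -/
noncomputable def size (M : E → ℝ) : ℝ := ∑ e, M e

/-- `v` is saturated by `M`. -/
def Saturated (es et : E → V) (M : E → ℝ) (v : V) : Prop :=
  degSum es et M v = 1

/-- `p_v(M)`: the minimum of `p_v(e)` over incident edges with `M(e) > 0` if `v`
is saturated, and `p_v(∅)` otherwise. -/
noncomputable def pval (es et : E → V) (p : V → E → ℝ) (pE : V → ℝ)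
    (M : E → ℝ) (v : V) : ℝ :=
  if h : degSum es et M v = 1 ∧ ((incident es et v).filter fun e => 0 < M e).Nonempty
  then ((incident es et v).filter fun e => 0 < M e).inf' h.2 (p v)
  else pE v

/-- An edge blocks `M` (weak stability, preferences with ties). -/
def WeakBlocks (es et : E → V) (p : V → E → ℝ) (pE : V → ℝ)
    (M : E → ℝ) (e : E) : Prop :=
  M e < 1 ∧ pval es et p pE M (es e) < p (es e) e ∧
    pval es et p pE M (et e) < p (et e) e

/-- Weak stability. -/
def WeaklyStable (es et : E → V) (p : V → E → ℝ) (pE : V → ℝ)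
    (M : E → ℝ) : Prop :=
  ∀ e, ¬ WeakBlocks es et p pE M e

/-- An edge `γ`-blocks `M`. -/
def GammaBlocks (es et : E → V) (p : V → E → ℝ) (pE : V → ℝ)
    (γ δ : V → E → ℝ) (M : E → ℝ) (e : E) : Prop :=
  0 ≤ min (p (es e) e - pval es et p pE M (es e) - γ (es e) e)
        (p (et e) e - pval es et p pE M (et e) - δ (et e) e) ∨
  0 ≤ min (p (es e) e - pval es et p pE M (es e) - δ (es e) e)
        (p (et e) e - pval es et p pE M (et e) - γ (et e) e)

/-- `γ`-stability. -/
def GammaStable (es et : E → V) (p : V → E → ℝ) (pE : V → ℝ)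
    (γ δ : V → E → ℝ) (M : E → ℝ) : Prop :=
  ∀ e, ¬ GammaBlocks es et p pE γ δ M e

/-- `pref v` is a strict linear order on the edges incident to `v`, for each `v`. -/
def IsStrictPref (es et : E → V) (pref : V → E → E → Prop) : Prop :=
  ∀ v, (∀ e ∈ incident es et v, ¬ pref v e e) ∧
    (∀ e ∈ incident es et v, ∀ f ∈ incident es et v, ∀ g ∈ incident es et v,
      pref v e f → pref v f g → pref v e g) ∧
    (∀ e ∈ incident es et v, ∀ f ∈ incident es et v, e ≠ f → pref v e f ∨ pref v f e)

/-- An edge blocks `M` (strict preferences). -/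
def StrictBlocks (es et : E → V) (pref : V → E → E → Prop)
    (M : E → ℝ) (e : E) : Prop :=
  M e < 1 ∧ ∀ w, (es e = w ∨ et e = w) →
    (¬ Saturated es et M w ∨ ∃ f ∈ incident es et w, 0 < M f ∧ pref w e f)

/-- Stability for strict preferences. -/
def StableStrict (es et : E → V) (pref : V → E → E → Prop) (M : E → ℝ) : Prop :=
  ∀ e, ¬ StrictBlocks es et pref M e

/-- The extension of the strict preferences of `v` to `E(v) ∪ {∅}`, where `∅ = none`. -/
def prefExt (pref : V → E → E → Prop) (v : V) : Option E → Option E → Prop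
  | some e, some f => pref v e f
  | some _, none => True
  | none, _ => False

/-- `vote_v(a,b) ∈ {+1, 0, -1}`. -/
noncomputable def vote (pref : V → E → E → Prop) (v : V) (a b : Option E) : ℝ :=
  haveI : Decidable (prefExt pref v a b) := Classical.propDecidable _
  if a = b then 0 else if prefExt pref v a b then 1 else -1

/-- `E(v) ∪ {∅}` as a finset of `Option E`. -/
def optIncident (es et : E → V) (v : V) : Finset (Option E) :=
  insert none ((incident es et v).map Function.Embedding.some)

/-- A feasible pairing between the fractional-matchings `M` and `N`. -/
def FeasiblePairing (es et : E → V) (M N : E → ℝ)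
    (φ : V → Option E → Option E → ℝ) : Prop :=
  (∀ v a b, 0 ≤ φ v a b) ∧
  (∀ v, ∀ e ∈ incident es et v,
      ∑ f ∈ optIncident es et v, φ v (some e) f = max (M e - N e) 0) ∧
  (∀ v, ∀ e ∈ incident es et v,
      ∑ f ∈ optIncident es et v, φ v f (some e) = max (N e - M e) 0) ∧
  (∀ v, ∑ f ∈ optIncident es et v, φ v f none
      = max (degSum es et M v - degSum es et N v) 0) ∧
  (∀ v, ∑ f ∈ optIncident es et v, φ v none f
      = max (degSum es et N v - degSum es et M v) 0)

/-- A sensible pairing between the fractional-matchings `M` and `N`. -/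
def SensiblePairing (es et : E → V) (M N : E → ℝ)
    (φ : V → Option E → Option E → ℝ) : Prop :=
  (∀ v a b, 0 ≤ φ v a b) ∧
  (∀ v, ∀ e ∈ incident es et v,
      ∑ f ∈ optIncident es et v, φ v (some e) f = M e) ∧
  (∀ v, ∀ e ∈ incident es et v,
      ∑ f ∈ optIncident es et v, φ v f (some e) = N e) ∧
  (∀ v, 0 < ∑ f ∈ optIncident es et v, φ v none f → degSum es et M v < 1) ∧
  (∀ v, 0 < ∑ f ∈ optIncident es et v, φ v f none → degSum es et N v < 1) ∧
  (∀ e, φ (es e) (some e) (some e) = φ (et e) (some e) (some e))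

/-- `Δ(M,N,φ)`. -/
noncomputable def Delta (es et : E → V) (pref : V → E → E → Prop)
    (φ : V → Option E → Option E → ℝ) : ℝ :=
  ∑ v, ∑ a ∈ optIncident es et v, ∑ b ∈ optIncident es et v,
    φ v a b * vote pref v a b

/-- A popular fractional-matching. -/
def PopularFrac (es et : E → V) (pref : V → E → E → Prop) (M : E → ℝ) : Prop :=
  ∀ N, IsFrac es et N → ∀ φ, FeasiblePairing es et M N φ → 0 ≤ Delta es et pref φ

/-- An extra-popular fractional-matching. -/
def ExtraPopular (es et : E → V) (pref : V → E → E → Prop) (M : E → ℝ) : Prop :=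
  ∀ N, IsFrac es et N → ∀ φ, SensiblePairing es et M N φ → 0 ≤ Delta es et pref φ

/-- A barely-defendable fractional-matching. -/
def BarelyDefendable (es et : E → V) (pref : V → E → E → Prop) (M : E → ℝ) : Prop :=
  ∀ N, IsFrac es et N → ∃ φ, SensiblePairing es et M N φ ∧ 0 ≤ Delta es et pref φ

/-- The mixed comparison score of `M` versus `N`. -/
noncomputable def mixedScore (es et : E → V) (pref : V → E → E → Prop)
    (M N : E → ℝ) : ℝ :=
  ∑ v, ((∑ e ∈ incident es et v, ∑ f ∈ incident es et v,
        M e * N f * vote pref v (some e) (some f))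
    + (∑ e ∈ incident es et v,
        M e * (1 - degSum es et N v) * vote pref v (some e) none)
    + (∑ f ∈ incident es et v,
        N f * (1 - degSum es et M v) * vote pref v none (some f)))

/-- A popular mixed-matching. -/
def PopularMixed (es et : E → V) (pref : V → E → E → Prop) (M : E → ℝ) : Prop :=
  ∀ N, IsFrac es et N → 0 ≤ mixedScore es et pref M N

/-- The weight `Σ_e ω(e)·M(e)` of a fractional-matching. -/
noncomputable def wsize (ω M : E → ℝ) : ℝ := ∑ e, ω e * M e

/-- The copies of an edge in the level instance: `none` is the original (level
`0`) copy; `some (false, k)` is the `(k+1)`-st extra copy added for the first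
endpoint being critical, and `some (true, k)` the one for the second endpoint.
`LevOK` states that the copy actually exists. -/
def LevOK (es et : E → V) (C : Finset V) {n : ℕ}
    (c : E × Option (Bool × Fin n)) : Prop :=
  c.2 = none ∨ (∃ k : Fin n, c.2 = some (false, k) ∧ es c.1 ∈ C) ∨
    (∃ k : Fin n, c.2 = some (true, k) ∧ et c.1 ∈ C)

instance {V E : Type*} [DecidableEq V] [DecidableEq E] (es et : E → V)
    (C : Finset V) (n : ℕ) : DecidablePred (@LevOK V E es et C n) := fun c => by
  unfold LevOK; infer_instance

/-- The level of a copy at a vertex `w`. -/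
def levAt {V E : Type*} [DecidableEq V] (es et : E → V) {n : ℕ} (w : V)
    (c : E × Option (Bool × Fin n)) : ℤ :=
  match c.2 with
  | none => 0
  | some (false, k) => if w = es c.1 then -((k : ℤ) + 1) else (k : ℤ) + 1
  | some (true, k) => if w = et c.1 then -((k : ℤ) + 1) else (k : ℤ) + 1

private lemma sum_degSum (es et : E → V) (hne : ∀ e, es e ≠ et e) (M : E → ℝ) (S : Finset V) :
    ∑ v ∈ S, degSum es et M v =
      ∑ e, M e * ((if es e ∈ S then (1:ℝ) else 0) + (if et e ∈ S then 1 else 0)) := by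
  have h1 : ∀ v ∈ S, degSum es et M v
      = ∑ e, if es e = v ∨ et e = v then M e else 0 := by
    intro v _
    rw [degSum, incident, Finset.sum_filter]
  rw [Finset.sum_congr rfl h1, Finset.sum_comm]
  refine Finset.sum_congr rfl fun e _ => ?_
  have hsplit : ∀ v ∈ S, (if es e = v ∨ et e = v then M e else 0)
      = (if es e = v then M e else 0) + (if et e = v then M e else 0) := by
    intro v _
    rcases Classical.em (es e = v) with h1 | h1 <;> rcases Classical.em (et e = v) with h2 | h2
    · exact absurd (h1.trans h2.symm) (hne e)
    all_goals simp [h1, h2]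
  rw [Finset.sum_congr rfl hsplit, Finset.sum_add_distrib,
    Finset.sum_ite_eq S (es e) (fun _ => M e), Finset.sum_ite_eq S (et e) (fun _ => M e)]
  split_ifs <;> ring

private lemma single_le_degSum (es et : E → V) (M : E → ℝ) (hM : ∀ e, 0 ≤ M e)
    (c : E) (w : V) (hc : es c = w ∨ et c = w) : M c ≤ degSum es et M w :=
  Finset.single_le_sum (fun e _ => hM e) (by simp [incident, hc])

private lemma pair_le_degSum (es et : E → V) (M : E → ℝ) (hM : ∀ e, 0 ≤ M e)
    (c f : E) (hcf : c ≠ f) (w : V) (hc : es c = w ∨ et c = w)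
    (hf : es f = w ∨ et f = w) : M c + M f ≤ degSum es et M w := by
  have hsub : ({c, f} : Finset E) ⊆ incident es et w := by
    intro x hx
    simp only [Finset.mem_insert, Finset.mem_singleton] at hx
    rcases hx with rfl | rfl <;> simp [incident, hc, hf]
  calc M c + M f = ∑ x ∈ ({c, f} : Finset E), M x := by rw [Finset.sum_pair hcf]
    _ ≤ degSum es et M w := Finset.sum_le_sum_of_subset_of_nonneg hsub (fun e _ _ => hM e)

private lemma levAt_none {V E : Type*} [DecidableEq V] (es et : E → V) {n : ℕ} (w : V)
    (c : E × Option (Bool × Fin n)) (h : c.2 = none) : levAt es et w c = 0 := by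
  obtain ⟨e, o⟩ := c
  cases h
  rfl

private lemma levAt_false {V E : Type*} [DecidableEq V] (es et : E → V) {n : ℕ} (w : V)
    (c : E × Option (Bool × Fin n)) (k : Fin n) (h : c.2 = some (false, k)) :
    levAt es et w c = if w = es c.1 then -((k : ℤ) + 1) else (k : ℤ) + 1 := by
  obtain ⟨e, o⟩ := c
  cases h
  rfl

private lemma levAt_true {V E : Type*} [DecidableEq V] (es et : E → V) {n : ℕ} (w : V)
    (c : E × Option (Bool × Fin n)) (k : Fin n) (h : c.2 = some (true, k)) :
    levAt es et w c = if w = et c.1 then -((k : ℤ) + 1) else (k : ℤ) + 1 := by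
  obtain ⟨e, o⟩ := c
  cases h
  rfl

/-- The level-instance copy type. -/
private abbrev LC (es et : E → V) (C : Finset V) : Type _ :=
  {c : E × Option (Bool × Fin C.card) // LevOK es et C c}

----------------------------------------------------------------------

/-- If some fractional-matching saturates every critical
vertex, then the projection of a stable half-matching of the level instance
saturates every critical vertex, i.e. it is a critical fractional-matching. -/
theorem projection_is_critical
    {V E : Type*} [Fintype V] [Fintype E] [DecidableEq V] [DecidableEq E]
    (es et : E → V) (hne : ∀ e, es e ≠ et e)
    (pref : V → E → E → Prop) (hpref : IsStrictPref es et pref)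
    (C : Finset V)
    (hex : ∃ x : E → ℝ, IsFrac es et x ∧ ∀ v ∈ C, Saturated es et x v)
    (pref' : V → {c : E × Option (Bool × Fin C.card) // LevOK es et C c} →
      {c : E × Option (Bool × Fin C.card) // LevOK es et C c} → Prop)
    (hlin : IsStrictPref
      (fun c : {c : E × Option (Bool × Fin C.card) // LevOK es et C c} => es c.1.1)
      (fun c => et c.1.1) pref')
    (hchar : ∀ w,
      ∀ c ∈ incident
        (fun c : {c : E × Option (Bool × Fin C.card) // LevOK es et C c} =>
          es c.1.1) (fun c => et c.1.1) w,
      ∀ d ∈ incident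
        (fun c : {c : E × Option (Bool × Fin C.card) // LevOK es et C c} =>
          es c.1.1) (fun c => et c.1.1) w,
        (pref' w c d ↔ levAt es et w d.1 < levAt es et w c.1 ∨
          (levAt es et w c.1 = levAt es et w d.1 ∧ pref w c.1.1 d.1.1)))
    (M' : {c : E × Option (Bool × Fin C.card) // LevOK es et C c} → ℝ)
    (hM' : IsHalf
      (fun c : {c : E × Option (Bool × Fin C.card) // LevOK es et C c} =>
        es c.1.1) (fun c => et c.1.1) M')
    (hstab : StableStrict
      (fun c : {c : E × Option (Bool × Fin C.card) // LevOK es et C c} =>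
        es c.1.1) (fun c => et c.1.1) pref' M') :
    ∀ v ∈ C, Saturated es et
      (fun e => ∑ c ∈ univ.filter
        (fun c : {c : E × Option (Bool × Fin C.card) // LevOK es et C c} =>
          c.1.1 = e), M' c) v := by
  classical
  obtain ⟨x, ⟨hx0, hx1⟩, hxsat⟩ := hex
  obtain ⟨⟨hM0, hMd⟩, hMhalf⟩ := hM'
  intro v hvC
  by_contra hcon
  have hne' : ∀ c : LC es et C, es c.1.1 ≠ et c.1.1 := fun c => hne c.1.1
  have mem_inc : ∀ (w : V) (c : LC es et C), (es c.1.1 = w ∨ et c.1.1 = w) →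
      c ∈ incident (fun c : LC es et C => es c.1.1) (fun c => et c.1.1) w := by
    intro w c h; simpa [incident] using h
  -- degree of the projection equals degree in the level instance
  have projdeg : ∀ w : V, degSum es et
      (fun e => ∑ c ∈ univ.filter (fun c : LC es et C => c.1.1 = e), M' c) w
      = degSum (fun c : LC es et C => es c.1.1) (fun c => et c.1.1) M' w := by
    intro w
    rw [degSum, degSum]
    have hstep : ∀ e ∈ incident es et w,
        (univ.filter (fun c : LC es et C => c.1.1 = e))
        = (incident (fun c : LC es et C => es c.1.1) (fun c => et c.1.1) w).filter
            (fun c => c.1.1 = e) := by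
      intro e he
      ext c
      simp only [incident, Finset.mem_filter, Finset.mem_univ, true_and] at he ⊢
      constructor
      · intro h; exact ⟨by rw [h]; exact he, h⟩
      · exact fun h => h.2
    rw [Finset.sum_congr rfl fun e he => by rw [hstep e he]]
    exact Finset.sum_fiberwise_of_maps_to (fun c hc => by
      simp only [incident, Finset.mem_filter, Finset.mem_univ, true_and] at hc ⊢
      exact hc) M'
  have hvdeg : degSum (fun c : LC es et C => es c.1.1) (fun c => et c.1.1) M' v ≠ 1 := by
    intro h
    exact hcon (by rw [Saturated, projdeg v, h])
  -- the descending chain of "bad" critical sets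
  set A : ℕ → Finset V := fun ℓ => C.filter (fun b =>
    degSum (fun c : LC es et C => es c.1.1) (fun c => et c.1.1) M' b ≠ 1 ∨
    ∃ c : LC es et C, (es c.1.1 = b ∨ et c.1.1 = b) ∧ 0 < M' c ∧
      levAt es et b c.1 ≤ -(ℓ:ℤ)) with hA
  have hAsub : ∀ ℓ, A ℓ ⊆ C := fun ℓ => Finset.filter_subset _ _
  have hAmono : ∀ ℓ, A (ℓ+1) ⊆ A ℓ := by
    intro ℓ b hb
    simp only [hA, Finset.mem_filter] at hb ⊢
    refine ⟨hb.1, ?_⟩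
    rcases hb.2 with h | ⟨c, h1, h2, h3⟩
    · exact Or.inl h
    · exact Or.inr ⟨c, h1, h2, by push_cast at h3 ⊢; omega⟩
  have hvA : ∀ ℓ, v ∈ A ℓ := by
    intro ℓ
    simp only [hA, Finset.mem_filter]
    exact ⟨hvC, Or.inl hvdeg⟩
  -- key stability lemma
  have key : ∀ ℓ : ℕ, 1 ≤ ℓ → ∀ b ∈ A (ℓ+1), ∀ w : V, ∀ c : LC es et C,
      (es c.1.1 = b ∧ et c.1.1 = w ∨ et c.1.1 = b ∧ es c.1.1 = w) →
      levAt es et b c.1 = -(ℓ:ℤ) →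
      degSum (fun c : LC es et C => es c.1.1) (fun c => et c.1.1) M' w = 1 ∧
        ∀ f : LC es et C, (es f.1.1 = w ∨ et f.1.1 = w) → 0 < M' f →
          (ℓ:ℤ) ≤ levAt es et w f.1 := by
    intro ℓ hℓ1 b hb w c hcw hlev
    have hcinc_b : es c.1.1 = b ∨ et c.1.1 = b := by tauto
    have hcinc_w : es c.1.1 = w ∨ et c.1.1 = w := by tauto
    have hℓZ : (1:ℤ) ≤ (ℓ:ℤ) := by exact_mod_cast hℓ1
    -- the level of c at w is ℓ
    have hlevw : levAt es et w c.1 = (ℓ:ℤ) := by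
      rcases hcopy : c.1.2 with _ | ⟨bl, k⟩
      · rw [levAt_none es et b c.1 hcopy] at hlev; omega
      · have hk : (0:ℤ) ≤ (k:ℤ) := Int.natCast_nonneg k.1
        cases bl
        · rw [levAt_false es et b c.1 k hcopy] at hlev
          rw [levAt_false es et w c.1 k hcopy]
          by_cases hbes : b = es c.1.1
          · have hetw : et c.1.1 = w := by
              rcases hcw with ⟨h1, h2⟩ | ⟨h1, h2⟩
              · exact h2
              · exact absurd (h1.trans hbes).symm (hne c.1.1)
            have hwes : ¬ (w = es c.1.1) := fun hh => hne c.1.1 (hh.symm.trans hetw.symm)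
            rw [if_pos hbes] at hlev
            rw [if_neg hwes]
            omega
          · rw [if_neg hbes] at hlev; omega
        · rw [levAt_true es et b c.1 k hcopy] at hlev
          rw [levAt_true es et w c.1 k hcopy]
          by_cases hbet : b = et c.1.1
          · have hesw : es c.1.1 = w := by
              rcases hcw with ⟨h1, h2⟩ | ⟨h1, h2⟩
              · exact absurd (h1.trans hbet) (hne c.1.1)
              · exact h2
            have hwet : ¬ (w = et c.1.1) := fun hh => hne c.1.1 (hesw.trans hh)
            rw [if_pos hbet] at hlev
            rw [if_neg hwet]
            omega
          · rw [if_neg hbet] at hlev; omega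
    -- c is not fully matched
    simp only [hA, Finset.mem_filter] at hb
    obtain ⟨hbC, hbprop⟩ := hb
    have hdegb := hMd b
    have hclt : M' c < 1 := by
      rcases lt_or_ge (M' c) 1 with h | h
      · exact h
      exfalso
      rcases hbprop with hh | ⟨f₀, hf₀inc, hf₀pos, hf₀lev⟩
      · have h1 := single_le_degSum (fun c : LC es et C => es c.1.1) (fun c => et c.1.1)
          M' hM0 c b hcinc_b
        exact hh (le_antisymm hdegb (le_trans h h1))
      · have hfc : f₀ ≠ c := by
          intro hh
          rw [hh, hlev] at hf₀lev
          omega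
        have h2 := pair_le_degSum (fun c : LC es et C => es c.1.1) (fun c => et c.1.1)
          M' hM0 c f₀ (fun hh => hfc hh.symm) b hcinc_b hf₀inc
        linarith
    -- the b-side blocking condition holds for c
    have hbcond : ¬ Saturated (fun c : LC es et C => es c.1.1) (fun c => et c.1.1) M' b ∨
        ∃ f ∈ incident (fun c : LC es et C => es c.1.1) (fun c => et c.1.1) b,
          0 < M' f ∧ pref' b c f := by
      rcases hbprop with hh | ⟨f₀, hf₀inc, hf₀pos, hf₀lev⟩
      · exact Or.inl hh
      · refine Or.inr ⟨f₀, mem_inc b f₀ hf₀inc, hf₀pos, ?_⟩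
        rw [hchar b c (mem_inc b c hcinc_b) f₀ (mem_inc b f₀ hf₀inc)]
        left
        rw [hlev]
        omega
    -- stability: the w-side condition must fail
    have hnb := hstab c
    rw [StrictBlocks] at hnb
    push_neg at hnb
    obtain ⟨w₀, hw₀inc, hw₀sat, hw₀pref⟩ := hnb hclt
    have hw₀w : w₀ = w := by
      by_contra hh
      have hw₀b : w₀ = b := by
        rcases hw₀inc with h | h <;> rcases hcw with ⟨h1, h2⟩ | ⟨h1, h2⟩
        · exact h.symm.trans h1
        · exact absurd (h.symm.trans h2) hh
        · exact absurd (h.symm.trans h2) hh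
        · exact h.symm.trans h1
      subst hw₀b
      rcases hbcond with hns | ⟨f₀, hf₀, hp, hpref⟩
      · exact hns hw₀sat
      · exact hw₀pref f₀ hf₀ hp hpref
    subst hw₀w
    refine ⟨hw₀sat, ?_⟩
    intro f hfinc hfpos
    have hnp := hw₀pref f (mem_inc w₀ f hfinc) hfpos
    rw [hchar w₀ c (mem_inc w₀ c hcinc_w) f (mem_inc w₀ f hfinc)] at hnp
    push_neg at hnp
    have h1 := hnp.1
    rw [hlevw] at h1
    omega
  -- extraction of the critical endpoint of a high-level copy
  have extract : ∀ ℓ : ℕ, 1 ≤ ℓ → ∀ w : V, ∀ f : LC es et C,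
      (es f.1.1 = w ∨ et f.1.1 = w) → 0 < M' f → (ℓ:ℤ) ≤ levAt es et w f.1 →
      ∃ b' ∈ A ℓ, (es f.1.1 = b' ∧ et f.1.1 = w) ∨ (et f.1.1 = b' ∧ es f.1.1 = w) := by
    intro ℓ hℓ1 w f hfinc hfpos hflev
    have hℓZ : (1:ℤ) ≤ (ℓ:ℤ) := by exact_mod_cast hℓ1
    rcases hcopy : f.1.2 with _ | ⟨bl, k⟩
    · rw [levAt_none es et w f.1 hcopy] at hflev; omega
    · have hk : (0:ℤ) ≤ (k:ℤ) := Int.natCast_nonneg k.1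
      cases bl
      · rw [levAt_false es et w f.1 k hcopy] at hflev
        have hwne : ¬ (w = es f.1.1) := by
          intro hh
          rw [if_pos hh] at hflev
          omega
        rw [if_neg hwne] at hflev
        have hetw : et f.1.1 = w := by
          rcases hfinc with h | h
          · exact absurd h.symm hwne
          · exact h
        have hesC : es f.1.1 ∈ C := by
          rcases f.2 with h | ⟨k', hk', hC⟩ | ⟨k', hk', hC⟩
          · rw [hcopy] at h; cases h
          · exact hC
          · rw [hcopy] at hk'; simp at hk'
        refine ⟨es f.1.1, ?_, Or.inl ⟨rfl, hetw⟩⟩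
        simp only [hA, Finset.mem_filter]
        refine ⟨hesC, Or.inr ⟨f, Or.inl rfl, hfpos, ?_⟩⟩
        rw [levAt_false es et (es f.1.1) f.1 k hcopy, if_pos rfl]
        omega
      · rw [levAt_true es et w f.1 k hcopy] at hflev
        have hwne : ¬ (w = et f.1.1) := by
          intro hh
          rw [if_pos hh] at hflev
          omega
        rw [if_neg hwne] at hflev
        have hesw : es f.1.1 = w := by
          rcases hfinc with h | h
          · exact h
          · exact absurd h.symm hwne
        have hetC : et f.1.1 ∈ C := by
          rcases f.2 with h | ⟨k', hk', hC⟩ | ⟨k', hk', hC⟩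
          · rw [hcopy] at h; cases h
          · rw [hcopy] at hk'; simp at hk'
          · exact hC
        refine ⟨et f.1.1, ?_, Or.inr ⟨rfl, hesw⟩⟩
        simp only [hA, Finset.mem_filter]
        refine ⟨hetC, Or.inr ⟨f, Or.inr rfl, hfpos, ?_⟩⟩
        rw [levAt_true es et (et f.1.1) f.1 k hcopy, if_pos rfl]
        omega
  -- pigeonhole: the chain stabilises somewhere
  obtain ⟨ℓ, hℓ1, hℓs, hAeq⟩ : ∃ ℓ : ℕ, 1 ≤ ℓ ∧ ℓ ≤ C.card ∧ A (ℓ+1) = A ℓ := by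
    by_contra hno
    push_neg at hno
    have hcard : ∀ j : ℕ, j ≤ C.card → (A (j+1)).card + j ≤ (A 1).card := by
      intro j
      induction j with
      | zero => intro _; simpa using le_rfl
      | succ n ih =>
        intro hn
        have h1 : A (n+1+1) ⊂ A (n+1) :=
          Finset.ssubset_iff_subset_ne.2 ⟨hAmono _, hno (n+1) (by omega) (by omega)⟩
        have h2 := Finset.card_lt_card h1
        have h3 := ih (by omega)
        omega
    have h1 := hcard C.card le_rfl
    have h2 : 1 ≤ (A (C.card+1)).card := Finset.card_pos.2 ⟨v, hvA _⟩
    have h3 : (A 1).card ≤ C.card := Finset.card_le_card (hAsub 1)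
    omega
  -- the neighbourhood of A ℓ
  set B : Finset V := univ.filter (fun w => ∃ e : E,
    (es e ∈ A ℓ ∧ et e = w) ∨ (et e ∈ A ℓ ∧ es e = w)) with hB
  -- main property of B
  have hBmain : ∀ w ∈ B,
      degSum (fun c : LC es et C => es c.1.1) (fun c => et c.1.1) M' w = 1 ∧
        ∀ f : LC es et C, (es f.1.1 = w ∨ et f.1.1 = w) → 0 < M' f →
          (ℓ:ℤ) ≤ levAt es et w f.1 := by
    intro w hw
    simp only [hB, Finset.mem_filter, Finset.mem_univ, true_and] at hw
    obtain ⟨e, he⟩ := hw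
    have hCpos : 1 ≤ C.card := Finset.card_pos.2 ⟨v, hvC⟩
    have hq : ℓ - 1 < C.card := by omega
    have hcast : ((⟨ℓ - 1, hq⟩ : Fin C.card) : ℤ) = (ℓ : ℤ) - 1 := by
      simp only [Fin.val_mk]
      push_cast [Nat.cast_sub hℓ1]
      ring
    rcases he with ⟨hbA, hwet⟩ | ⟨hbA, hwes⟩
    · have hbC : es e ∈ C := hAsub ℓ hbA
      refine key ℓ hℓ1 (es e) (hAeq.symm ▸ hbA) w
        ⟨(e, some (false, ⟨ℓ - 1, hq⟩)), Or.inr (Or.inl ⟨⟨ℓ - 1, hq⟩, rfl, hbC⟩)⟩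
        (Or.inl ⟨rfl, hwet⟩) ?_
      rw [levAt_false es et (es e) (e, some (false, ⟨ℓ - 1, hq⟩)) ⟨ℓ - 1, hq⟩ rfl, if_pos rfl,
        hcast]
      ring
    · have hbC : et e ∈ C := hAsub ℓ hbA
      refine key ℓ hℓ1 (et e) (hAeq.symm ▸ hbA) w
        ⟨(e, some (true, ⟨ℓ - 1, hq⟩)), Or.inr (Or.inr ⟨⟨ℓ - 1, hq⟩, rfl, hbC⟩)⟩
        (Or.inr ⟨rfl, hwes⟩) ?_
      rw [levAt_true es et (et e) (e, some (true, ⟨ℓ - 1, hq⟩)) ⟨ℓ - 1, hq⟩ rfl, if_pos rfl,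
        hcast]
      ring
  have hBnotA : ∀ w ∈ B, w ∉ A ℓ := by
    intro w hw hwA
    obtain ⟨hsat, hlev⟩ := hBmain w hw
    simp only [hA, Finset.mem_filter] at hwA
    rcases hwA.2 with h | ⟨c, h1, h2, h3⟩
    · exact h hsat
    · have := hlev c h1 h2
      omega
  have hAtoB : ∀ e : E, (es e ∈ A ℓ → et e ∈ B) ∧ (et e ∈ A ℓ → es e ∈ B) := by
    intro e
    constructor
    · intro h; simp only [hB, Finset.mem_filter, Finset.mem_univ, true_and]
      exact ⟨e, Or.inl ⟨h, rfl⟩⟩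
    · intro h; simp only [hB, Finset.mem_filter, Finset.mem_univ, true_and]
      exact ⟨e, Or.inr ⟨h, rfl⟩⟩
  -- positive copies at B vertices have their other endpoint in A ℓ
  have hBtoA : ∀ c : LC es et C, 0 < M' c →
      (es c.1.1 ∈ B → et c.1.1 ∈ A ℓ) ∧ (et c.1.1 ∈ B → es c.1.1 ∈ A ℓ) := by
    intro c hpos
    constructor
    · intro hes
      obtain ⟨hsat, hlev⟩ := hBmain _ hes
      obtain ⟨b', hb'A, hcase⟩ := extract ℓ hℓ1 (es c.1.1) c (Or.inl rfl) hpos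
        (hlev c (Or.inl rfl) hpos)
      rcases hcase with ⟨h1, h2⟩ | ⟨h1, h2⟩
      · exact absurd h2.symm (hne c.1.1)
      · exact h1 ▸ hb'A
    · intro het
      obtain ⟨hsat, hlev⟩ := hBmain _ het
      obtain ⟨b', hb'A, hcase⟩ := extract ℓ hℓ1 (et c.1.1) c (Or.inr rfl) hpos
        (hlev c (Or.inr rfl) hpos)
      rcases hcase with ⟨h1, h2⟩ | ⟨h1, h2⟩
      · exact h1 ▸ hb'A
      · exact absurd h2 (hne c.1.1)
  -- the x-side counting
  have count1 : ((A ℓ).card : ℝ) ≤ (B.card : ℝ) := by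
    have e1 : ∑ a ∈ A ℓ, degSum es et x a = ((A ℓ).card : ℝ) := by
      rw [Finset.sum_congr rfl (fun a ha => hxsat a (hAsub ℓ ha))]
      simp
    have e2 : ∑ a ∈ A ℓ, degSum es et x a ≤ ∑ w ∈ B, degSum es et x w := by
      rw [sum_degSum es et hne x (A ℓ), sum_degSum es et hne x B]
      refine Finset.sum_le_sum fun e _ => ?_
      refine mul_le_mul_of_nonneg_left ?_ (hx0 e)
      have h1 := (hAtoB e).1
      have h2 := (hAtoB e).2
      have hi1 : (if es e ∈ A ℓ then (1:ℝ) else 0) ≤ (if et e ∈ B then 1 else 0) := by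
        split_ifs with u1 u2
        · exact le_rfl
        · exact absurd (h1 u1) u2
        · norm_num
        · exact le_rfl
      have hi2 : (if et e ∈ A ℓ then (1:ℝ) else 0) ≤ (if es e ∈ B then 1 else 0) := by
        split_ifs with u1 u2
        · exact le_rfl
        · exact absurd (h2 u1) u2
        · norm_num
        · exact le_rfl
      linarith
    have e3 : ∑ w ∈ B, degSum es et x w ≤ (B.card : ℝ) := by
      calc ∑ w ∈ B, degSum es et x w ≤ ∑ _w ∈ B, (1:ℝ) :=
            Finset.sum_le_sum fun w _ => hx1 w
        _ = (B.card : ℝ) := by simp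
    linarith
  -- the M'-side counting
  have count2 : (B.card : ℝ) < ((A ℓ).card : ℝ) := by
    have f1 : (B.card : ℝ) = ∑ w ∈ B,
        degSum (fun c : LC es et C => es c.1.1) (fun c => et c.1.1) M' w := by
      rw [Finset.sum_congr rfl (fun w hw => (hBmain w hw).1)]
      simp
    have f2 : ∑ w ∈ B, degSum (fun c : LC es et C => es c.1.1) (fun c => et c.1.1) M' w
        ≤ ∑ a ∈ A ℓ, degSum (fun c : LC es et C => es c.1.1) (fun c => et c.1.1) M' a := by
      rw [sum_degSum _ _ hne' M' B, sum_degSum _ _ hne' M' (A ℓ)]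
      refine Finset.sum_le_sum fun c _ => ?_
      rcases eq_or_lt_of_le (hM0 c) with h0 | hpos
      · rw [← h0]; simp
      refine mul_le_mul_of_nonneg_left ?_ (hM0 c)
      have h1 := (hBtoA c hpos).1
      have h2 := (hBtoA c hpos).2
      have hi1 : (if es c.1.1 ∈ B then (1:ℝ) else 0) ≤ (if et c.1.1 ∈ A ℓ then 1 else 0) := by
        split_ifs with u1 u2
        · exact le_rfl
        · exact absurd (h1 u1) u2
        · norm_num
        · exact le_rfl
      have hi2 : (if et c.1.1 ∈ B then (1:ℝ) else 0) ≤ (if es c.1.1 ∈ A ℓ then 1 else 0) := by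
        split_ifs with u1 u2
        · exact le_rfl
        · exact absurd (h2 u1) u2
        · norm_num
        · exact le_rfl
      linarith
    have f3 : ∑ a ∈ A ℓ, degSum (fun c : LC es et C => es c.1.1) (fun c => et c.1.1) M' a
        < ((A ℓ).card : ℝ) := by
      have h := Finset.sum_lt_sum
        (f := fun a => degSum (fun c : LC es et C => es c.1.1) (fun c => et c.1.1) M' a)
        (g := fun _ => (1:ℝ)) (fun a _ => hMd a)
        ⟨v, hvA ℓ, lt_of_le_of_ne (hMd v) hvdeg⟩
      simpa using h
    linarith
  linarith


end SR
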